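/- arXiv:1304.2318 — 6 statements merged into one kernel-verified Lean document; each statement's English description precedes it below -/
import Mathlib

section
/- Assume y₀ and y₁ are differentiable on (0,∞) and satisfy the Bessel recurrences y₀′(s) = −y₁(s) and y₁′(s) = y₀(s) − y₁(s)/s for all s > 0. Then for every integer N ≥ 1, the pair (P_N, α_N) satisfies the first Gowdy constraint: ∂α_N/∂τ (τ,θ) = (∂P_N/∂τ (τ,θ))² + e^{−2τ}·(∂P_N/∂θ (τ,θ))² for all (τ,θ) ∈ ℝ². -/
/-- The Gowdy wave `P_N(τ,θ) = (A/√N)·y₀(N·e^{−τ})·sin(N·θ)` (in the paper `y₀ = J₀`). -/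
noncomputable def P_N (A : ℝ) (y₀ : ℝ → ℝ) (N : ℕ) (τ θ : ℝ) : ℝ :=
  (A / Real.sqrt N) * y₀ ((N : ℝ) * Real.exp (-τ)) * Real.sin ((N : ℝ) * θ)

/-- `y₂(s) = (2/s)·y₁(s) − y₀(s)` (in the paper, the Bessel recurrence giving `J₂`). -/
noncomputable def y₂fun (y₀ y₁ : ℝ → ℝ) (s : ℝ) : ℝ := (2 / s) * y₁ s - y₀ s

/-- The Gowdy metric function
`α_N(τ,θ) = −(A²e^{−τ}/2)·y₁(Ne^{−τ})·y₀(Ne^{−τ})·cos(2Nθ)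
            − (A²Ne^{−2τ}/4)·[y₀(Ne^{−τ})² + 2y₁(Ne^{−τ})² − y₀(Ne^{−τ})·y₂(Ne^{−τ})]`. -/
noncomputable def α_N (A : ℝ) (y₀ y₁ : ℝ → ℝ) (N : ℕ) (τ θ : ℝ) : ℝ :=
  -(A ^ 2 * Real.exp (-τ) / 2) * y₁ ((N : ℝ) * Real.exp (-τ)) * y₀ ((N : ℝ) * Real.exp (-τ))
      * Real.cos (2 * (N : ℝ) * θ)
    - (A ^ 2 * (N : ℝ) * Real.exp (-2 * τ) / 4) *
        ((y₀ ((N : ℝ) * Real.exp (-τ))) ^ 2 + 2 * (y₁ ((N : ℝ) * Real.exp (-τ))) ^ 2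
          - y₀ ((N : ℝ) * Real.exp (-τ)) * y₂fun y₀ y₁ ((N : ℝ) * Real.exp (-τ)))

/-!
In the variable `s = N e^{−τ}`, and using `cos 2x = 1 − 2 sin² x`, the metric function is
`α_N = −(A²/2N)·(E(s) − 2 C(s) sin²(Nθ))` with `E(s) = s²(y₀² + y₁²)` and `C(s) = s y₀ y₁`.
The Bessel recurrences give the clean derivatives `E′ = 2 s y₀²` and `C′ = s (y₀² − y₁²)`, and
since `ds/dτ = −s` this yields `∂α_N/∂τ = (A²/N)·s²·(y₀² cos²(Nθ) + y₁² sin²(Nθ))`, which is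
exactly `(∂P_N/∂τ)² + e^{−2τ}(∂P_N/∂θ)²`.
-/

open Real

noncomputable def besselEnergy (y₀ y₁ : ℝ → ℝ) (s : ℝ) : ℝ := s ^ 2 * (y₀ s ^ 2 + y₁ s ^ 2)

noncomputable def besselCross (y₀ y₁ : ℝ → ℝ) (s : ℝ) : ℝ := s * y₀ s * y₁ s

section BesselRecurrence

variable {y₀ y₁ : ℝ → ℝ} {s : ℝ}

theorem hasDerivAt_besselEnergy (hy₀ : HasDerivAt y₀ (-y₁ s) s)
    (hy₁ : HasDerivAt y₁ (y₀ s - y₁ s / s) s) (hs : s ≠ 0) :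
    HasDerivAt (besselEnergy y₀ y₁) (2 * s * y₀ s ^ 2) s := by
  refine (((hasDerivAt_id' s).pow 2).mul ((hy₀.pow 2).add (hy₁.pow 2))).congr_deriv ?_
  simp only [Pi.add_apply, Pi.pow_apply]
  field_simp
  ring

theorem hasDerivAt_besselCross (hy₀ : HasDerivAt y₀ (-y₁ s) s)
    (hy₁ : HasDerivAt y₁ (y₀ s - y₁ s / s) s) (hs : s ≠ 0) :
    HasDerivAt (besselCross y₀ y₁) (s * (y₀ s ^ 2 - y₁ s ^ 2)) s := by
  refine (((hasDerivAt_id' s).mul hy₀).mul hy₁).congr_deriv ?_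
  simp only [Pi.mul_apply]
  field_simp
  ring

end BesselRecurrence

theorem hasDerivAt_comp_const_mul_exp_neg {f : ℝ → ℝ} {f' c τ : ℝ}
    (hf : HasDerivAt f f' (c * exp (-τ))) :
    HasDerivAt (fun t => f (c * exp (-t))) (-(c * exp (-τ)) * f') τ :=
  (hf.comp τ ((hasDerivAt_neg' τ).exp.const_mul c)).congr_deriv (by ring)

theorem exp_neg_two_mul_eq_sq (τ : ℝ) : exp (-2 * τ) = exp (-τ) ^ 2 := by
  rw [← exp_nat_mul]; ring_nf

theorem α_N_eq (A : ℝ) (y₀ y₁ : ℝ → ℝ) {N : ℕ} (hN : N ≠ 0) (τ θ : ℝ) :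
    α_N A y₀ y₁ N τ θ = -(A ^ 2 / (2 * N)) *
      (besselEnergy y₀ y₁ (N * exp (-τ))
        - 2 * besselCross y₀ y₁ (N * exp (-τ)) * sin (N * θ) ^ 2) := by
  have hcos : cos (2 * N * θ) = 1 - 2 * sin (N * θ) ^ 2 := by
    rw [mul_assoc, cos_two_mul, cos_sq']; ring
  simp only [α_N, y₂fun, besselEnergy, besselCross, exp_neg_two_mul_eq_sq, hcos]
  field_simp
  ring

theorem hasDerivAt_P_N_time (A : ℝ) {y₀ y₁ : ℝ → ℝ} (N : ℕ) (τ θ : ℝ)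
    (hy₀ : HasDerivAt y₀ (-y₁ (N * exp (-τ))) (N * exp (-τ))) :
    HasDerivAt (fun t => P_N A y₀ N t θ)
      (A / √N * (N * exp (-τ) * y₁ (N * exp (-τ))) * sin (N * θ)) τ :=
  ((hasDerivAt_comp_const_mul_exp_neg hy₀).const_mul (A / √N)).mul_const (sin (N * θ))
    |>.congr_deriv (by ring)

theorem hasDerivAt_P_N_angle (A : ℝ) (y₀ : ℝ → ℝ) (N : ℕ) (τ θ : ℝ) :
    HasDerivAt (fun x => P_N A y₀ N τ x)
      (A / √N * y₀ (N * exp (-τ)) * (N * cos (N * θ))) θ :=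
  (((hasDerivAt_id' θ).const_mul (N : ℝ)).sin.const_mul _).congr_deriv (by ring)

theorem gowdy_first_constraint_general (A : ℝ) (y₀ y₁ : ℝ → ℝ)
    (hy₀ : ∀ s > (0:ℝ), HasDerivAt y₀ (-y₁ s) s)
    (hy₁ : ∀ s > (0:ℝ), HasDerivAt y₁ (y₀ s - y₁ s / s) s)
    (N : ℕ) (hN : 1 ≤ N) (τ θ : ℝ) :
    deriv (fun t : ℝ => α_N A y₀ y₁ N t θ) τ
      = (deriv (fun t : ℝ => P_N A y₀ N t θ) τ) ^ 2
        + Real.exp (-2 * τ) * (deriv (fun s : ℝ => P_N A y₀ N τ s) θ) ^ 2 := by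
  have hN₀ : N ≠ 0 := Nat.one_le_iff_ne_zero.mp hN
  set s := (N : ℝ) * exp (-τ) with hs
  have hs₀ : 0 < s := by positivity
  have hα : HasDerivAt (fun t => α_N A y₀ y₁ N t θ)
      (-(A ^ 2 / (2 * N)) * (-s * (2 * s * y₀ s ^ 2 - 2 * (s * (y₀ s ^ 2 - y₁ s ^ 2))
        * sin (N * θ) ^ 2))) τ := by
    simp only [α_N_eq A y₀ y₁ hN₀]
    have hE := hasDerivAt_besselEnergy (hy₀ s hs₀) (hy₁ s hs₀) hs₀.ne'
    have hC := hasDerivAt_besselCross (hy₀ s hs₀) (hy₁ s hs₀) hs₀.ne'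
    exact (hasDerivAt_comp_const_mul_exp_neg
      (hE.sub ((hC.const_mul 2).mul_const (sin (N * θ) ^ 2)))).const_mul _
  rw [hα.deriv, (hasDerivAt_P_N_time A N τ θ (hy₀ s hs₀)).deriv,
    (hasDerivAt_P_N_angle A y₀ N τ θ).deriv]
  have hsqrt : √(N : ℝ) ^ 2 = N := sq_sqrt (Nat.cast_nonneg N)
  have hN' : (N : ℝ) ≠ 0 := Nat.cast_ne_zero.mpr hN₀
  rw [exp_neg_two_mul_eq_sq, hs]
  field_simp
  rw [hsqrt, cos_sq']
  ring

/-- If `y₀, y₁` satisfy the Bessel recurrences `y₀′ = −y₁` and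
`y₁′(s) = y₀(s) − y₁(s)/s` on `(0,∞)`, then for every `N ≥ 1` the pair `(P_N, α_N)`
satisfies the first Gowdy constraint
`∂α_N/∂τ = (∂P_N/∂τ)² + e^{−2τ}(∂P_N/∂θ)²` at every `(τ,θ)`. -/
theorem gowdy_first_constraint (A : ℝ) (hA : 0 < A) (y₀ y₁ : ℝ → ℝ)
    (hy₀ : ∀ s > (0:ℝ), HasDerivAt y₀ (-y₁ s) s)
    (hy₁ : ∀ s > (0:ℝ), HasDerivAt y₁ (y₀ s - y₁ s / s) s)
    (N : ℕ) (hN : 1 ≤ N) (τ θ : ℝ) :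
    deriv (fun t : ℝ => α_N A y₀ y₁ N t θ) τ
      = (deriv (fun t : ℝ => P_N A y₀ N t θ) τ) ^ 2
        + Real.exp (-2 * τ) * (deriv (fun s : ℝ => P_N A y₀ N τ s) θ) ^ 2 :=
  gowdy_first_constraint_general A y₀ y₁ hy₀ hy₁ N hN τ θ
end

section
/- Assume y₀ and y₁ are differentiable on (0,∞) and satisfy the Bessel recurrences y₀′(s) = −y₁(s) and y₁′(s) = y₀(s) − y₁(s)/s for all s > 0. Then for every integer N ≥ 1, the pair (P_N, α_N) satisfies the second Gowdy constraint: ∂α_N/∂θ (τ,θ) = 2·(∂P_N/∂θ (τ,θ))·(∂P_N/∂τ (τ,θ)) for all (τ,θ) ∈ ℝ². -/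
/-! Both sides equal `A²N e^{−τ} y₀ y₁ sin(2Nθ)`, with `y₀, y₁` evaluated at `N e^{−τ}`: the
θ-independent bracket of `α_N` drops out of `∂_θ α_N`, the chain rule with `y₀′ = −y₁` gives
`∂_τ P_N`, and `sin 2Nθ = 2 sin Nθ cos Nθ`. -/

section

variable (A : ℝ) (y₀ y₁ : ℝ → ℝ) (N : ℕ) (τ θ : ℝ)

theorem hasDerivAt_P_N_theta :
    HasDerivAt (fun s : ℝ => P_N A y₀ N τ s)
      (A / Real.sqrt N * y₀ ((N : ℝ) * Real.exp (-τ)) * (N * Real.cos ((N : ℝ) * θ))) θ := by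
  have hsin := ((hasDerivAt_id θ).const_mul (N : ℝ)).sin
  simp only [id, mul_one, mul_comm (Real.cos _)] at hsin
  unfold P_N
  exact hsin.const_mul _

theorem hasDerivAt_P_N_tau {y₀' : ℝ}
    (hy₀ : HasDerivAt y₀ y₀' ((N : ℝ) * Real.exp (-τ))) :
    HasDerivAt (fun t : ℝ => P_N A y₀ N t θ)
      (-(A / Real.sqrt N) * y₀' * ((N : ℝ) * Real.exp (-τ)) * Real.sin ((N : ℝ) * θ)) τ := by
  have hx : HasDerivAt (fun t : ℝ => (N : ℝ) * Real.exp (-t)) (-((N : ℝ) * Real.exp (-τ))) τ := by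
    simpa using (hasDerivAt_neg τ).exp.const_mul (N : ℝ)
  unfold P_N
  exact (((hy₀.comp τ hx).const_mul (A / Real.sqrt N)).mul_const _).congr_deriv (by ring)

theorem hasDerivAt_α_N_theta :
    HasDerivAt (fun s : ℝ => α_N A y₀ y₁ N τ s)
      (A ^ 2 * N * Real.exp (-τ) * y₁ ((N : ℝ) * Real.exp (-τ)) * y₀ ((N : ℝ) * Real.exp (-τ))
        * Real.sin (2 * N * θ)) θ := by
  have hcos := ((hasDerivAt_id θ).const_mul (2 * (N : ℝ))).cos
  simp only [id, mul_one] at hcos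
  unfold α_N
  exact ((hcos.const_mul _).sub_const _).congr_deriv (by ring)

end

theorem gowdy_second_constraint_general (A : ℝ) (y₀ y₁ : ℝ → ℝ)
    (hy₀ : ∀ s > (0:ℝ), HasDerivAt y₀ (-y₁ s) s)
    (N : ℕ) (hN : 1 ≤ N) (τ θ : ℝ) :
    deriv (fun s : ℝ => α_N A y₀ y₁ N τ s) θ
      = 2 * (deriv (fun s : ℝ => P_N A y₀ N τ s) θ)
          * (deriv (fun t : ℝ => P_N A y₀ N t θ) τ) := by
  have hN₀ : (0 : ℝ) < N := by exact_mod_cast hN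
  have hx : 0 < (N : ℝ) * Real.exp (-τ) := by positivity
  rw [(hasDerivAt_α_N_theta A y₀ y₁ N τ θ).deriv, (hasDerivAt_P_N_theta A y₀ N τ θ).deriv,
    (hasDerivAt_P_N_tau A y₀ N τ θ (hy₀ _ hx)).deriv, mul_assoc 2 (N : ℝ), Real.sin_two_mul]
  field_simp
  rw [Real.sq_sqrt hN₀.le]
  ring

/-- If `y₀, y₁` satisfy the Bessel recurrences `y₀′ = −y₁` and
`y₁′(s) = y₀(s) − y₁(s)/s` on `(0,∞)`, then for every `N ≥ 1` the pair `(P_N, α_N)`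
satisfies the second Gowdy constraint
`∂α_N/∂θ = 2·(∂P_N/∂θ)·(∂P_N/∂τ)` at every `(τ,θ)`. -/
theorem gowdy_second_constraint (A : ℝ) (hA : 0 < A) (y₀ y₁ : ℝ → ℝ)
    (hy₀ : ∀ s > (0:ℝ), HasDerivAt y₀ (-y₁ s) s)
    (hy₁ : ∀ s > (0:ℝ), HasDerivAt y₁ (y₀ s - y₁ s / s) s)
    (N : ℕ) (hN : 1 ≤ N) (τ θ : ℝ) :
    deriv (fun s : ℝ => α_N A y₀ y₁ N τ s) θ
      = 2 * (deriv (fun s : ℝ => P_N A y₀ N τ s) θ)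
          * (deriv (fun t : ℝ => P_N A y₀ N t θ) τ) :=
  gowdy_second_constraint_general A y₀ y₁ hy₀ N hN τ θ
end

section
/- Assume there is a constant C > 0 such that for all s ≥ 1, |y₀(s) − √(2/(πs))·cos(s − π/4)| ≤ C·s^{−3/2} and |y₁(s) − √(2/(πs))·sin(s − π/4)| ≤ C·s^{−3/2}. Then for every compact set K ⊂ ℝ², sup_{(τ,θ)∈K} |α_N(τ,θ) + A²·e^{−τ}/π| → 0 as N → ∞. That is, α_N converges uniformly on compact sets to the background value α⁽⁰⁾(τ) = −A²·e^{−τ}/π. -/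
open Filter

open Real

lemma abs_sq_sub_sq_le {a b ε : ℝ} (h : |a - b| ≤ ε) : |a ^ 2 - b ^ 2| ≤ ε * (ε + 2 * |b|) := by
  have hsum : |a - b + 2 * b| ≤ ε + 2 * |b| := by
    calc |a - b + 2 * b| ≤ |a - b| + |2 * b| := abs_add_le _ _
      _ ≤ ε + 2 * |b| := by rw [abs_mul, abs_two]; linarith
  calc |a ^ 2 - b ^ 2| = |a - b| * |a - b + 2 * b| := by rw [← abs_mul]; ring_nf
    _ ≤ ε * (ε + 2 * |b|) := mul_le_mul h hsum (abs_nonneg _) ((abs_nonneg _).trans h)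

lemma abs_sq_add_sq_sub_sq_le {u v r φ ε : ℝ} (hu : |u - r * cos φ| ≤ ε)
    (hv : |v - r * sin φ| ≤ ε) : |u ^ 2 + v ^ 2 - r ^ 2| ≤ 2 * ε * (ε + 2 * |r|) := by
  have hcos := abs_sq_sub_sq_le hu
  have hsin := abs_sq_sub_sq_le hv
  have hrcos : |r * cos φ| ≤ |r| := by
    rw [abs_mul]; exact mul_le_of_le_one_right (abs_nonneg r) (abs_cos_le_one φ)
  have hrsin : |r * sin φ| ≤ |r| := by
    rw [abs_mul]; exact mul_le_of_le_one_right (abs_nonneg r) (abs_sin_le_one φ)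
  have hε : 0 ≤ ε := (abs_nonneg _).trans hu
  calc |u ^ 2 + v ^ 2 - r ^ 2|
      = |(u ^ 2 - (r * cos φ) ^ 2) + (v ^ 2 - (r * sin φ) ^ 2)| := by
        congr 1; linear_combination r ^ 2 * sin_sq_add_cos_sq φ
    _ ≤ |u ^ 2 - (r * cos φ) ^ 2| + |v ^ 2 - (r * sin φ) ^ 2| := abs_add_le _ _
    _ ≤ 2 * ε * (ε + 2 * |r|) := by nlinarith

lemma rpow_neg_three_halves {s : ℝ} (hs : 0 < s) : s ^ (-(3 : ℝ) / 2) = 1 / (s * √s) := by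
  rw [show -(3 : ℝ) / 2 = -(1 + 1 / 2) by ring, rpow_neg hs.le, rpow_add hs, rpow_one,
    ← sqrt_eq_rpow, one_div]

lemma sqrt_two_div_pi_mul_le {s : ℝ} (hs : 0 < s) : √(2 / (π * s)) ≤ 1 / √s := by
  rw [← sqrt_one, ← sqrt_div' _ hs.le]
  exact sqrt_le_sqrt (by rw [div_le_div_iff₀ (by positivity) hs]; nlinarith [pi_gt_three])

lemma abs_bessel_bracket_sub_le {s C φ c u v : ℝ} (hs : 1 ≤ s) (hc : |c| ≤ 1)
    (hu : |u - √(2 / (π * s)) * cos φ| ≤ C * s ^ (-(3 : ℝ) / 2))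
    (hv : |v - √(2 / (π * s)) * sin φ| ≤ C * s ^ (-(3 : ℝ) / 2)) :
    |v * u * (c - 1) + s * (u ^ 2 + v ^ 2) - 2 / π| ≤ 4 * (1 + C) ^ 2 / s := by
  have hs0 : 0 < s := one_pos.trans_le hs
  rw [rpow_neg_three_halves hs0, mul_one_div] at hu hv
  set r := √(2 / (π * s))
  set t := √s
  have ht : 1 ≤ t := one_le_sqrt.mpr hs
  have hts : t ^ 2 = s := sq_sqrt hs0.le
  have hC : 0 ≤ C := by
    have h := (abs_nonneg _).trans hu
    rwa [le_div_iff₀ (by positivity), zero_mul] at h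
  have hε : C / (s * t) ≤ C / t := div_le_div_of_nonneg_left hC (by positivity) (by nlinarith)
  have hr : |r| ≤ 1 / t := (abs_of_nonneg (sqrt_nonneg _)).trans_le (sqrt_two_div_pi_mul_le hs0)
  have hsr : s * r ^ 2 = 2 / π := by
    rw [sq_sqrt (by positivity)]; field_simp
  have hbound {w x : ℝ} (hx : |x| ≤ 1) (h : |w - r * x| ≤ C / (s * t)) : |w| ≤ (1 + C) / t := by
    have hrx : |r * x| ≤ 1 / t := by
      rw [abs_mul]; exact (mul_le_of_le_one_right (abs_nonneg r) hx).trans hr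
    have := abs_sub_abs_le_abs_sub w (r * x)
    rw [add_div]; linarith
  have hprod : |v * u * (c - 1)| ≤ 2 * (1 + C) ^ 2 / s := by
    have hc1 : |c - 1| ≤ 2 := (abs_sub _ _).trans (by rw [abs_one]; linarith)
    calc |v * u * (c - 1)| = |v| * |u| * |c - 1| := by rw [abs_mul, abs_mul]
      _ ≤ (1 + C) / t * ((1 + C) / t) * 2 := by
        gcongr
        exacts [hbound (abs_sin_le_one φ) hv, hbound (abs_cos_le_one φ) hu]
      _ = 2 * (1 + C) ^ 2 / s := by rw [← hts]; ring
  have hsq : s * |u ^ 2 + v ^ 2 - r ^ 2| ≤ 2 * C * (2 + C) / s := by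
    calc s * |u ^ 2 + v ^ 2 - r ^ 2| ≤ s * (2 * (C / (s * t)) * (C / (s * t) + 2 * |r|)) := by
          gcongr; exact abs_sq_add_sq_sub_sq_le hu hv
      _ ≤ s * (2 * (C / (s * t)) * (C / t + 2 * (1 / t))) := by gcongr
      _ = 2 * C * (2 + C) / s := by rw [← hts]; field_simp; ring
  calc |v * u * (c - 1) + s * (u ^ 2 + v ^ 2) - 2 / π|
      = |v * u * (c - 1) + s * (u ^ 2 + v ^ 2 - r ^ 2)| := by rw [← hsr]; ring_nf
    _ ≤ |v * u * (c - 1)| + s * |u ^ 2 + v ^ 2 - r ^ 2| :=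
        (abs_add_le _ _).trans_eq (by rw [abs_mul s, abs_of_pos hs0])
    _ ≤ 2 * (1 + C) ^ 2 / s + 2 * C * (2 + C) / s := add_le_add hprod hsq
    _ ≤ 4 * (1 + C) ^ 2 / s := by rw [← add_div]; gcongr; nlinarith

lemma α_N_add_eq (A : ℝ) (y₀ y₁ : ℝ → ℝ) {N : ℕ} (hN : N ≠ 0) (τ θ : ℝ) :
    α_N A y₀ y₁ N τ θ + A ^ 2 * exp (-τ) / π =
      -(A ^ 2 * exp (-τ) / 2) *
        (y₁ (N * exp (-τ)) * y₀ (N * exp (-τ)) * (cos (2 * N * θ) - 1)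
          + N * exp (-τ) * (y₀ (N * exp (-τ)) ^ 2 + y₁ (N * exp (-τ)) ^ 2) - 2 / π) := by
  have hexp : exp (-2 * τ) = exp (-τ) ^ 2 := by rw [← exp_nat_mul]; ring_nf
  simp only [α_N, y₂fun, hexp]
  field_simp
  ring

lemma abs_α_N_add_le (A C : ℝ) (y₀ y₁ : ℝ → ℝ)
    (h0 : ∀ s : ℝ, 1 ≤ s → |y₀ s - √(2 / (π * s)) * cos (s - π / 4)| ≤ C * s ^ (-(3 : ℝ) / 2))
    (h1 : ∀ s : ℝ, 1 ≤ s → |y₁ s - √(2 / (π * s)) * sin (s - π / 4)| ≤ C * s ^ (-(3 : ℝ) / 2))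
    {N : ℕ} {τ : ℝ} (hs : 1 ≤ N * exp (-τ)) (θ : ℝ) :
    |α_N A y₀ y₁ N τ θ + A ^ 2 * exp (-τ) / π| ≤ 2 * A ^ 2 * (1 + C) ^ 2 / N := by
  have hN : N ≠ 0 := by rintro rfl; norm_num at hs
  rw [α_N_add_eq A y₀ y₁ hN, abs_mul, abs_neg, abs_of_nonneg (by positivity)]
  calc A ^ 2 * exp (-τ) / 2 * |_|
      ≤ A ^ 2 * exp (-τ) / 2 * (4 * (1 + C) ^ 2 / (N * exp (-τ))) := by
        gcongr
        exact abs_bessel_bracket_sub_le hs (abs_cos_le_one _) (h0 _ hs) (h1 _ hs)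
    _ = 2 * A ^ 2 * (1 + C) ^ 2 / N := by field_simp; ring

lemma one_le_mul_exp_neg {x τ : ℝ} (h : exp τ ≤ x) : 1 ≤ x * exp (-τ) := by
  rwa [exp_neg, ← div_eq_mul_inv, one_le_div (exp_pos τ)]

theorem α_N_uniform_limit_general (A C : ℝ) (y₀ y₁ : ℝ → ℝ)
    (h0 : ∀ s : ℝ, 1 ≤ s →
      |y₀ s - Real.sqrt (2 / (Real.pi * s)) * Real.cos (s - Real.pi / 4)|
        ≤ C * s ^ (-(3:ℝ)/2))
    (h1 : ∀ s : ℝ, 1 ≤ s →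
      |y₁ s - Real.sqrt (2 / (Real.pi * s)) * Real.sin (s - Real.pi / 4)|
        ≤ C * s ^ (-(3:ℝ)/2))
    (K : Set (ℝ × ℝ)) (hK : IsCompact K) :
    Tendsto (fun N : ℕ =>
        sSup ((fun p : ℝ × ℝ =>
          |α_N A y₀ y₁ N p.1 p.2 + A ^ 2 * Real.exp (-p.1) / Real.pi|) '' K))
      atTop (nhds 0) := by
  obtain ⟨R, hR⟩ := (hK.image continuous_fst).bddAbove
  have hsup_le : ∀ᶠ N : ℕ in atTop, sSup ((fun p : ℝ × ℝ =>
      |α_N A y₀ y₁ N p.1 p.2 + A ^ 2 * exp (-p.1) / π|) '' K) ≤ 2 * A ^ 2 * (1 + C) ^ 2 / N := by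
    filter_upwards [eventually_ge_atTop ⌈exp R⌉₊] with N hN
    refine Real.sSup_le ?_ (by positivity)
    rintro _ ⟨p, hp, rfl⟩
    refine abs_α_N_add_le A C y₀ y₁ h0 h1 (one_le_mul_exp_neg ?_) p.2
    calc exp p.1 ≤ exp R := exp_le_exp.mpr (hR ⟨p, hp, rfl⟩)
      _ ≤ N := Nat.ceil_le.mp hN
  refine squeeze_zero' (Eventually.of_forall fun N => Real.sSup_nonneg ?_) hsup_le
    (tendsto_const_div_atTop_nhds_zero_nat _)
  rintro _ ⟨p, -, rfl⟩
  exact abs_nonneg _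

/-- Under the standard large-argument Bessel asymptotics
`|y₀(s) − √(2/(πs))·cos(s − π/4)| ≤ C·s^{−3/2}` and
`|y₁(s) − √(2/(πs))·sin(s − π/4)| ≤ C·s^{−3/2}` for `s ≥ 1`, the functions `α_N`
converge uniformly on every compact `K ⊂ ℝ²` to the background value
`α⁽⁰⁾(τ) = −A²·e^{−τ}/π`. -/
theorem α_N_uniform_limit (A C : ℝ) (hA : 0 < A) (hC : 0 < C) (y₀ y₁ : ℝ → ℝ)
    (h0 : ∀ s : ℝ, 1 ≤ s →
      |y₀ s - Real.sqrt (2 / (Real.pi * s)) * Real.cos (s - Real.pi / 4)|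
        ≤ C * s ^ (-(3:ℝ)/2))
    (h1 : ∀ s : ℝ, 1 ≤ s →
      |y₁ s - Real.sqrt (2 / (Real.pi * s)) * Real.sin (s - Real.pi / 4)|
        ≤ C * s ^ (-(3:ℝ)/2))
    (K : Set (ℝ × ℝ)) (hK : IsCompact K) :
    Tendsto (fun N : ℕ =>
        sSup ((fun p : ℝ × ℝ =>
          |α_N A y₀ y₁ N p.1 p.2 + A ^ 2 * Real.exp (-p.1) / Real.pi|) '' K))
      atTop (nhds 0) :=
  α_N_uniform_limit_general A C y₀ y₁ h0 h1 K hK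
end

section
/- Assume y₀ is differentiable on (0,∞) with y₀′(s) = −y₁(s), and assume there is a constant C > 0 such that for all s ≥ 1, |y₀(s) − √(2/(πs))·cos(s − π/4)| ≤ C·s^{−3/2} and |y₁(s) − √(2/(πs))·sin(s − π/4)| ≤ C·s^{−3/2}. Then for every continuous compactly supported f : ℝ² → ℝ, lim_{N→∞} ∬_{ℝ²} f(τ,θ)·(∂P_N/∂τ (τ,θ))·(∂P_N/∂θ (τ,θ)) dτ dθ = 0. That is, the weak limit of the cross product of derivatives (∂_τ P_N)(∂_θ P_N) vanishes. -/
open Filter MeasureTheory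
open Real Set Topology Function
open scoped FourierTransform

theorem tendsto_integral_mul_sin {ι : Type*} {l : Filter ι} {g : ℝ → ℝ} (hg : Integrable g)
    {ω : ι → ℝ} (hω : Tendsto ω l (cocompact ℝ)) :
    Tendsto (fun i => ∫ v, g v * sin (ω i * v)) l (𝓝 0) := by
  have hfreq : Tendsto (fun i => ω i * -(2 * π)⁻¹) l (cocompact ℝ) :=
    (tendsto_cocompact_mul_right (b := -(2 * π)) (by field_simp)).comp hω
  have hfourier := (Complex.continuous_im.tendsto 0).comp
    ((Real.tendsto_integral_exp_smul_cocompact fun v => (g v : ℂ)).comp hfreq)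
  rw [Complex.zero_im] at hfourier
  refine hfourier.congr fun i => ?_
  have hint : Integrable fun v : ℝ => 𝐞 (-(v * (ω i * -(2 * π)⁻¹))) • (g v : ℂ) :=
    (Real.fourierIntegral_convergent_iff' (ContinuousLinearMap.mul ℝ ℝ) _).2 hg.ofReal
  rw [Function.comp_apply, Function.comp_apply, ← RCLike.im_eq_complex_im, ← integral_im hint]
  congr 1 with v
  have hphase : 2 * π * -(v * (ω i * -(2 * π)⁻¹)) = ω i * v := by field_simp
  rw [Circle.smul_def, Real.fourierChar_apply, hphase, smul_eq_mul, RCLike.im_eq_complex_im,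
    Complex.im_mul_ofReal, Complex.exp_ofReal_mul_I_im, mul_comm]

theorem tendsto_integral_mul_mul_sin_snd {ι : Type*} {l : Filter ι} [l.IsCountablyGenerated]
    {f : ℝ × ℝ → ℝ} (hf : Integrable f) {a : ι → ℝ → ℝ}
    (ha_meas : ∀ᶠ i in l, AEStronglyMeasurable (a i)) {B : ℝ}
    (ha_bdd : ∀ᶠ i in l, ∀ p ∈ support f, |a i p.1| ≤ B)
    {ω : ι → ℝ} (hω : Tendsto ω l (cocompact ℝ)) :
    Tendsto (fun i => ∫ p, f p * a i p.1 * sin (ω i * p.2)) l (𝓝 0) := by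
  wlog hB : 0 ≤ B generalizing B
  · exact this (ha_bdd.mono fun i hi p hp => (hi p hp).trans (le_max_left B 0)) (le_max_right B 0)
  rw [Measure.volume_eq_prod] at hf ⊢
  set I : ι → ℝ → ℝ := fun i τ => ∫ θ, f (τ, θ) * sin (ω i * θ) with hI
  have hslice : ∀ᵐ τ, Integrable fun θ => f (τ, θ) := hf.prod_right_ae
  have hsin_meas (i : ι) :
      AEStronglyMeasurable (fun p : ℝ × ℝ => sin (ω i * p.2)) (volume.prod volume) :=
    (by fun_prop : Continuous _).aestronglyMeasurable
  have hkey : ∀ᶠ i in l, ∀ τ, ‖a i τ * I i τ‖ ≤ B * ‖I i τ‖ := by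
    filter_upwards [ha_bdd] with i hi τ
    rw [norm_mul]
    by_cases hτ : ∃ θ, f (τ, θ) ≠ 0
    · obtain ⟨θ, hθ⟩ := hτ
      exact mul_le_mul_of_nonneg_right (hi (τ, θ) hθ) (norm_nonneg _)
    · push Not at hτ
      simp [hI, hτ]
  have hfubini : ∀ᶠ i in l, ∫ p, f p * a i p.1 * sin (ω i * p.2) ∂(volume.prod volume)
      = ∫ τ, a i τ * I i τ := by
    filter_upwards [ha_meas, ha_bdd] with i hmeas hbdd
    have hint : Integrable (fun p : ℝ × ℝ => f p * a i p.1 * sin (ω i * p.2))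
        (volume.prod volume) := by
      refine (hf.norm.const_mul B).mono' ((hf.1.mul hmeas.comp_fst).mul (hsin_meas i))
        (Eventually.of_forall fun p => ?_)
      by_cases hp : f p = 0
      · simp [hp]
      rw [norm_mul, norm_mul, Real.norm_eq_abs, Real.norm_eq_abs, Real.norm_eq_abs]
      calc |f p| * |a i p.1| * |sin (ω i * p.2)| ≤ |f p| * B * 1 := by
            gcongr
            exacts [hbdd p hp, abs_sin_le_one _]
        _ = B * ‖f p‖ := by rw [Real.norm_eq_abs]; ring
    rw [integral_prod _ hint]
    congr 1 with τ
    rw [hI, ← integral_const_mul]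
    congr 1 with θ
    ring
  refine (tendsto_congr' hfubini).2 ?_
  rw [← integral_zero ℝ ℝ]
  refine tendsto_integral_filter_of_dominated_convergence (fun τ => B * ∫ θ, ‖f (τ, θ)‖)
    ?_ ?_ (hf.integral_norm_prod_left.const_mul _) ?_
  · filter_upwards [ha_meas] with i hi
    exact hi.mul (hf.1.mul (hsin_meas i)).integral_prod_right'
  · filter_upwards [hkey] with i hi
    filter_upwards [hslice] with τ hτ
    refine (hi τ).trans (mul_le_mul_of_nonneg_left ?_ hB)
    refine norm_integral_le_of_norm_le hτ.norm (Eventually.of_forall fun θ => ?_)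
    rw [norm_mul]
    exact mul_le_of_le_one_right (norm_nonneg _) (abs_sin_le_one _)
  · filter_upwards [hslice] with τ hτ
    refine squeeze_zero_norm' ?_
      (by simpa using (tendsto_integral_mul_sin hτ hω).norm.const_mul B)
    filter_upwards [hkey] with i hi using hi τ

theorem sqrt_mul_abs_le_of_abs_sub_le {C s y c : ℝ} (hs : 1 ≤ s) (hc : |c| ≤ 1)
    (h : |y - √(2 / (π * s)) * c| ≤ C * s ^ (-(3:ℝ)/2)) :
    √s * |y| ≤ √(2 / π) + C := by
  have hs0 : 0 < s := one_pos.trans_le hs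
  have hsqrt : √s * √(2 / (π * s)) = √(2 / π) := by
    rw [← sqrt_mul hs0.le]; congr 1; field_simp
  have hrpow : √s * s ^ (-(3:ℝ)/2) = s⁻¹ := by
    rw [sqrt_eq_rpow, ← rpow_add hs0, ← rpow_neg_one]; norm_num
  have hC : 0 ≤ C := nonneg_of_mul_nonneg_left ((abs_nonneg _).trans h) (by positivity)
  calc √s * |y| ≤ √s * (|y - √(2 / (π * s)) * c| + |√(2 / (π * s)) * c|) := by
        gcongr
        linarith [abs_sub_abs_le_abs_sub y (√(2 / (π * s)) * c)]
    _ ≤ √s * (C * s ^ (-(3:ℝ)/2) + √(2 / (π * s)) * 1) := by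
        rw [abs_mul, abs_of_nonneg (sqrt_nonneg _)]
        gcongr
    _ = √(2 / π) + C * s⁻¹ := by linear_combination C * hrpow + hsqrt
    _ ≤ √(2 / π) + C := by gcongr; exact mul_le_of_le_one_right hC (inv_le_one_of_one_le₀ hs)

theorem abs_mul_mul_le_of_bessel_asymptotics {C s u v : ℝ} (hs : 1 ≤ s)
    (hu : |u - √(2 / (π * s)) * cos (s - π / 4)| ≤ C * s ^ (-(3:ℝ)/2))
    (hv : |v - √(2 / (π * s)) * sin (s - π / 4)| ≤ C * s ^ (-(3:ℝ)/2)) :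
    |s * u * v| ≤ (√(2 / π) + C) ^ 2 := by
  have hu' := sqrt_mul_abs_le_of_abs_sub_le hs (abs_cos_le_one _) hu
  have hv' := sqrt_mul_abs_le_of_abs_sub_le hs (abs_sin_le_one _) hv
  calc |s * u * v| = (√s * |u|) * (√s * |v|) := by
        rw [mul_mul_mul_comm, mul_self_sqrt (zero_le_one.trans hs), abs_mul, abs_mul,
          abs_of_nonneg (zero_le_one.trans hs), mul_assoc]
    _ ≤ (√(2 / π) + C) ^ 2 := by
        rw [sq]
        gcongr
        exact (by positivity : (0:ℝ) ≤ _).trans hv'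

theorem hasDerivAt_P_N_fst (A : ℝ) {y₀ : ℝ → ℝ} {N : ℕ} {τ y₀' : ℝ}
    (hy₀ : HasDerivAt y₀ y₀' (N * exp (-τ))) (θ : ℝ) :
    HasDerivAt (fun t => P_N A y₀ N t θ)
      (-(A / √N * (N * exp (-τ) * y₀') * sin (N * θ))) τ := by
  have hs : HasDerivAt (fun t => N * exp (-t)) (N * (exp (-τ) * -1)) τ :=
    (hasDerivAt_neg τ).exp.const_mul (N : ℝ)
  refine ((((hy₀.comp τ hs).const_mul (A / √N)).mul_const (sin (N * θ)))).congr_deriv ?_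
  ring

theorem hasDerivAt_P_N_snd (A : ℝ) (y₀ : ℝ → ℝ) (N : ℕ) (τ θ : ℝ) :
    HasDerivAt (fun s => P_N A y₀ N τ s)
      (A / √N * y₀ (N * exp (-τ)) * (N * cos (N * θ))) θ := by
  refine (((hasDerivAt_id θ).const_mul (N : ℝ)).sin.const_mul
    (A / √N * y₀ (N * exp (-τ)))).congr_deriv ?_
  simp only [id, mul_one]
  ring

theorem deriv_P_N_fst_mul_deriv_P_N_snd (A : ℝ) {y₀ y₁ : ℝ → ℝ}
    (hy₀ : ∀ s > (0:ℝ), HasDerivAt y₀ (-y₁ s) s) {N : ℕ} (hN : N ≠ 0) (τ θ : ℝ) :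
    deriv (fun t => P_N A y₀ N t θ) τ * deriv (fun s => P_N A y₀ N τ s) θ
      = A ^ 2 / 2 * (N * exp (-τ) * y₀ (N * exp (-τ)) * y₁ (N * exp (-τ)))
        * sin (2 * N * θ) := by
  have hN' : (0 : ℝ) < N := Nat.cast_pos.2 (Nat.pos_of_ne_zero hN)
  rw [(hasDerivAt_P_N_fst A (hy₀ _ (by positivity)) θ).deriv,
    (hasDerivAt_P_N_snd A y₀ N τ θ).deriv, show 2 * (N : ℝ) * θ = 2 * (N * θ) by ring,
    sin_two_mul]
  field_simp
  rw [sq_sqrt hN'.le]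

theorem measurable_comp_mul_mul_of_hasDerivAt {y₀ y₁ : ℝ → ℝ}
    (hy₀ : ∀ s > (0:ℝ), HasDerivAt y₀ (-y₁ s) s) {φ : ℝ → ℝ} (hφ : Continuous φ)
    (hφ_pos : ∀ x, 0 < φ x) : Measurable fun x => φ x * y₀ (φ x) * y₁ (φ x) := by
  have hy₀φ : Continuous fun x => y₀ (φ x) :=
    ContinuousOn.comp_continuous (s := Ioi 0)
      (fun s hs => (hy₀ s hs).continuousAt.continuousWithinAt) hφ hφ_pos
  have hy₁φ : Measurable fun x => y₁ (φ x) := by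
    convert ((measurable_deriv y₀).comp hφ.measurable).neg using 1
    ext x
    simp [(hy₀ _ (hφ_pos x)).deriv]
  exact (hφ.measurable.mul hy₀φ.measurable).mul hy₁φ

theorem eventually_one_le_natCast_mul_exp_neg (r : ℝ) :
    ∀ᶠ N : ℕ in atTop, ∀ τ ≤ r, 1 ≤ N * exp (-τ) := by
  filter_upwards [tendsto_natCast_atTop_atTop.eventually_ge_atTop (exp r)] with N hN τ hτ
  calc (1 : ℝ) = exp r * exp (-r) := by rw [← exp_add, add_neg_cancel, exp_zero]
    _ ≤ N * exp (-τ) := by gcongr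

theorem wlim_cross_derivs_P_N_general (A C : ℝ) (y₀ y₁ : ℝ → ℝ)
    (hy₀ : ∀ s > (0:ℝ), HasDerivAt y₀ (-y₁ s) s)
    (h0 : ∀ s : ℝ, 1 ≤ s →
      |y₀ s - Real.sqrt (2 / (Real.pi * s)) * Real.cos (s - Real.pi / 4)|
        ≤ C * s ^ (-(3:ℝ)/2))
    (h1 : ∀ s : ℝ, 1 ≤ s →
      |y₁ s - Real.sqrt (2 / (Real.pi * s)) * Real.sin (s - Real.pi / 4)|
        ≤ C * s ^ (-(3:ℝ)/2))
    (f : ℝ × ℝ → ℝ) (hf : Continuous f) (hsupp : HasCompactSupport f) :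
    Tendsto (fun N : ℕ =>
        ∫ p : ℝ × ℝ, f p * (deriv (fun t : ℝ => P_N A y₀ N t p.2) p.1)
          * (deriv (fun s : ℝ => P_N A y₀ N p.1 s) p.2))
      atTop (nhds 0) := by
  obtain ⟨r, hr⟩ := hsupp.isBounded.subset_closedBall (0 : ℝ × ℝ)
  have hfst : ∀ p ∈ support f, p.1 ≤ r := fun p hp => (le_abs_self p.1).trans <|
    (norm_fst_le p).trans <| mem_closedBall_zero_iff.1 (hr (subset_tsupport f hp))
  have hmeas : ∀ᶠ N : ℕ in atTop, AEStronglyMeasurable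
      fun τ => A ^ 2 / 2 * (N * exp (-τ) * y₀ (N * exp (-τ)) * y₁ (N * exp (-τ))) := by
    filter_upwards [eventually_ne_atTop 0] with N hN
    exact ((measurable_comp_mul_mul_of_hasDerivAt hy₀ (by fun_prop)
      fun τ => by positivity).const_mul _).aestronglyMeasurable
  have hbdd : ∀ᶠ N : ℕ in atTop, ∀ p ∈ support f,
      |A ^ 2 / 2 * (N * exp (-p.1) * y₀ (N * exp (-p.1)) * y₁ (N * exp (-p.1)))|
        ≤ A ^ 2 / 2 * (√(2 / π) + C) ^ 2 := by
    filter_upwards [eventually_one_le_natCast_mul_exp_neg r] with N hN p hp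
    have hs := hN p.1 (hfst p hp)
    rw [abs_mul, abs_of_nonneg (by positivity)]
    gcongr
    exact abs_mul_mul_le_of_bessel_asymptotics hs (h0 _ hs) (h1 _ hs)
  have hω : Tendsto (fun N : ℕ => 2 * (N : ℝ)) atTop (cocompact ℝ) :=
    (tendsto_natCast_atTop_atTop.const_mul_atTop two_pos).mono_right atTop_le_cocompact
  refine (tendsto_integral_mul_mul_sin_snd (hf.integrable_of_hasCompactSupport hsupp)
    hmeas hbdd hω).congr' ?_
  filter_upwards [eventually_ne_atTop 0] with N hN
  refine integral_congr_ae (Eventually.of_forall fun p => ?_)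
  simp only [mul_assoc, deriv_P_N_fst_mul_deriv_P_N_snd A hy₀ hN]

/-- Under the standard large-argument Bessel asymptotics for `y₀, y₁`
(and `y₀′ = −y₁`), the weak limit of the cross product `(∂_τ P_N)(∂_θ P_N)` vanishes:
for every continuous compactly supported `f : ℝ² → ℝ`,
`∬ f·(∂P_N/∂τ)·(∂P_N/∂θ) → 0` as `N → ∞`. -/
theorem wlim_cross_derivs_P_N (A C : ℝ) (hA : 0 < A) (hC : 0 < C) (y₀ y₁ : ℝ → ℝ)
    (hy₀ : ∀ s > (0:ℝ), HasDerivAt y₀ (-y₁ s) s)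
    (h0 : ∀ s : ℝ, 1 ≤ s →
      |y₀ s - Real.sqrt (2 / (Real.pi * s)) * Real.cos (s - Real.pi / 4)|
        ≤ C * s ^ (-(3:ℝ)/2))
    (h1 : ∀ s : ℝ, 1 ≤ s →
      |y₁ s - Real.sqrt (2 / (Real.pi * s)) * Real.sin (s - Real.pi / 4)|
        ≤ C * s ^ (-(3:ℝ)/2))
    (f : ℝ × ℝ → ℝ) (hf : Continuous f) (hsupp : HasCompactSupport f) :
    Tendsto (fun N : ℕ =>
        ∫ p : ℝ × ℝ, f p * (deriv (fun t : ℝ => P_N A y₀ N t p.2) p.1)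
          * (deriv (fun s : ℝ => P_N A y₀ N p.1 s) p.2))
      atTop (nhds 0) :=
  wlim_cross_derivs_P_N_general A C y₀ y₁ hy₀ h0 h1 f hf hsupp
end

section
/- Let A > 0 and for λ > 0 define φ_λ : ℝ³ → ℝ by φ_λ(x₁,x₂,x₃) = λ·A·(sin(x₁/λ) + sin(x₂/λ) + sin(x₃/λ)). Define Δφ_λ = Σ_i ∂²φ_λ/∂x_i² and |∇φ_λ|² = Σ_i (∂φ_λ/∂x_i)². Then for every continuously differentiable compactly supported f : ℝ³ → ℝ and all i, j ∈ {1,2,3}: (a) lim_{λ→0⁺} ∫_{ℝ³} f·(2·Δφ_λ + |∇φ_λ|²) dx = (3A²/2)·∫_{ℝ³} f dx, and (b) lim_{λ→0⁺} ∫_{ℝ³} f·(2·∂²φ_λ/∂x_i∂x_j − 2·δ_{ij}·Δφ_λ − 2·(∂φ_λ/∂x_i)(∂φ_λ/∂x_j) − δ_{ij}·|∇φ_λ|²) dx = −(5A²/2)·δ_{ij}·∫_{ℝ³} f dx. Hence the effective stress-energy tensor t⁽⁰⁾ = (1/8π)·wlim of these expressions has components t⁽⁰⁾₀₀ = 3A²/(16π)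 and t⁽⁰⁾_{ij} = −(5A²/(16π))·δ_{ij}, corresponding to a fluid with P = −(5/3)·ρ, which is neither traceless nor satisfies the weak energy condition. -/
/-!
As `λ → 0`, `∂ᵢφ_λ = A cos(xᵢ/λ)` and `∂ᵢ∂ⱼφ_λ = -δᵢⱼ A sin(xᵢ/λ)/λ`. Against a `C¹` compactly
supported test function, `cos(L x/λ) ⇀ 0` for every nonzero linear form `L` (Riemann–Lebesgue),
and an integration by parts along `xᵢ` turns `sin(xᵢ/λ)/λ` into `cos(xᵢ/λ)` paired with `∂ᵢ f`, so
`∂ᵢ∂ⱼφ_λ ⇀ 0`. Product-to-sum formulas give `cos²(xᵢ/λ) ⇀ 1/2` and `cos(xᵢ/λ) cos(xⱼ/λ) ⇀ 0` for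
`i ≠ j`, hence `∂ᵢφ_λ ∂ⱼφ_λ ⇀ δᵢⱼ A²/2`, `Δφ_λ ⇀ 0` and `|∇φ_λ|² ⇀ 3A²/2`; both limits in the
theorem are linear combinations of these.
-/

/-- The conformal exponent `φ_λ(x) = λ·A·(sin(x₁/λ) + sin(x₂/λ) + sin(x₃/λ)) = log Ω(λ)`. -/
noncomputable def phiConf (A lam : ℝ) (x : Fin 3 → ℝ) : ℝ :=
  lam * A * (Real.sin (x 0 / lam) + Real.sin (x 1 / lam) + Real.sin (x 2 / lam))

/-- The partial derivative `∂φ_λ/∂x_i` at `x`. -/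
noncomputable def dphiConf (A lam : ℝ) (i : Fin 3) (x : Fin 3 → ℝ) : ℝ :=
  deriv (fun t : ℝ => phiConf A lam (Function.update x i t)) (x i)

/-- The second partial derivative `∂²φ_λ/∂x_i∂x_j` at `x`. -/
noncomputable def d2phiConf (A lam : ℝ) (i j : Fin 3) (x : Fin 3 → ℝ) : ℝ :=
  deriv (fun t : ℝ => dphiConf A lam j (Function.update x i t)) (x i)

/-- The Laplacian `Δφ_λ = Σ_i ∂²φ_λ/∂x_i²`. -/
noncomputable def lapPhiConf (A lam : ℝ) (x : Fin 3 → ℝ) : ℝ :=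
  ∑ i : Fin 3, d2phiConf A lam i i x

/-- The squared gradient `|∇φ_λ|² = Σ_i (∂φ_λ/∂x_i)²`. -/
noncomputable def gradSqPhiConf (A lam : ℝ) (x : Fin 3 → ℝ) : ℝ :=
  ∑ i : Fin 3, (dphiConf A lam i x) ^ 2

open Filter MeasureTheory

open Real
open scoped Topology

variable {V : Type*} [NormedAddCommGroup V] [NormedSpace ℝ V]

section WeakLimit

variable [MeasurableSpace V]

/-- The paper's `wlim`, with `C¹` compactly supported test functions; continuity of `u t` and `u₀`
makes every pairing `∫ f * u t` integrable. -/
def WeakTendsto {ι : Type*} (μ : Measure V) (u : ι → V → ℝ) (l : Filter ι) (u₀ : V → ℝ) :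
    Prop :=
  (∀ᶠ t in l, Continuous (u t)) ∧ Continuous u₀ ∧
    ∀ f : V → ℝ, ContDiff ℝ 1 f → HasCompactSupport f →
      Tendsto (fun t => ∫ x, f x * u t x ∂μ) l (𝓝 (∫ x, f x * u₀ x ∂μ))

namespace WeakTendsto

variable {ι : Type*} {μ : Measure V} {l : Filter ι} {u w : ι → V → ℝ} {u₀ w₀ : V → ℝ}

theorem congr' (hu : WeakTendsto μ u l u₀) (h : ∀ᶠ t in l, u t = w t) :
    WeakTendsto μ w l u₀ :=
  ⟨(hu.1.and h).mono fun _ h' => h'.2 ▸ h'.1, hu.2.1, fun f hf hfs =>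
    (hu.2.2 f hf hfs).congr' (h.mono fun t ht => by simp only [ht])⟩

theorem const (hu₀ : Continuous u₀) : WeakTendsto μ (fun _ => u₀) l u₀ :=
  ⟨.of_forall fun _ => hu₀, hu₀, fun _ _ _ => tendsto_const_nhds⟩

theorem const_mul (hu : WeakTendsto μ u l u₀) (c : ℝ) :
    WeakTendsto μ (fun t x => c * u t x) l (fun x => c * u₀ x) :=
  ⟨hu.1.mono fun _ h => continuous_const.mul h, continuous_const.mul hu.2.1, fun f hf hfs => by
    simpa only [mul_left_comm (f _), integral_const_mul] using (hu.2.2 f hf hfs).const_mul c⟩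

theorem tendsto_integral_mul_const {c : ℝ} (hu : WeakTendsto μ u l (fun _ => c)) {f : V → ℝ}
    (hf : ContDiff ℝ 1 f) (hfs : HasCompactSupport f) :
    Tendsto (fun t => ∫ x, f x * u t x ∂μ) l (𝓝 (c * ∫ x, f x ∂μ)) := by
  have h := hu.2.2 f hf hfs
  rwa [integral_mul_const, mul_comm] at h

variable [OpensMeasurableSpace V] [IsFiniteMeasureOnCompacts μ]

theorem add (hu : WeakTendsto μ u l u₀) (hw : WeakTendsto μ w l w₀) :
    WeakTendsto μ (fun t x => u t x + w t x) l (fun x => u₀ x + w₀ x) := by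
  refine ⟨(hu.1.and hw.1).mono fun _ h => h.1.add h.2, hu.2.1.add hw.2.1, fun f hf hfs => ?_⟩
  have integral_split : ∀ g h : V → ℝ, Continuous g → Continuous h →
      ∫ x, f x * (g x + h x) ∂μ = ∫ x, f x * g x ∂μ + ∫ x, f x * h x ∂μ := fun g h hg hh => by
    simp only [mul_add]
    exact integral_add ((hf.continuous.mul hg).integrable_of_hasCompactSupport hfs.mul_right)
      ((hf.continuous.mul hh).integrable_of_hasCompactSupport hfs.mul_right)
  rw [integral_split _ _ hu.2.1 hw.2.1]
  refine ((hu.2.2 f hf hfs).add (hw.2.2 f hf hfs)).congr' ?_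
  filter_upwards [hu.1, hw.1] with t hut hwt using (integral_split _ _ hut hwt).symm

theorem sub (hu : WeakTendsto μ u l u₀) (hw : WeakTendsto μ w l w₀) :
    WeakTendsto μ (fun t x => u t x - w t x) l (fun x => u₀ x - w₀ x) := by
  simpa only [neg_one_mul, ← sub_eq_add_neg] using hu.add (hw.const_mul (-1))

theorem finset_sum {κ : Type*} (s : Finset κ) {u : κ → ι → V → ℝ} {u₀ : κ → V → ℝ}
    (hu : ∀ k ∈ s, WeakTendsto μ (u k) l (u₀ k)) :
    WeakTendsto μ (fun t x => ∑ k ∈ s, u k t x) l (fun x => ∑ k ∈ s, u₀ k x) := by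
  classical
  induction s using Finset.induction_on with
  | empty => simpa using const (μ := μ) (l := l) continuous_const
  | insert k s hk ih =>
    simp only [Finset.sum_insert hk]
    exact (hu k (s.mem_insert_self k)).add (ih fun k' hk' => hu k' (Finset.mem_insert_of_mem hk'))

end WeakTendsto

end WeakLimit

section Oscillation

variable [FiniteDimensional ℝ V]

theorem tendsto_inv_smul_cocompact {L : StrongDual ℝ V} (hL : L ≠ 0) :
    Tendsto (fun t : ℝ => (2 * π * t)⁻¹ • L) (𝓝[>] 0) (cocompact (StrongDual ℝ V)) := by
  rw [← Metric.cobounded_eq_cocompact, ← tendsto_norm_atTop_iff_cobounded]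
  have h2π : Tendsto (fun t : ℝ => 2 * π * t) (𝓝[>] 0) (𝓝[>] 0) :=
    tendsto_nhdsWithin_of_tendsto_nhds_of_eventually_within _
      (by simpa using ((continuous_const_mul (2 * π)).tendsto 0).mono_left nhdsWithin_le_nhds)
      (eventually_nhdsWithin_of_forall fun t (ht : 0 < t) => Set.mem_Ioi.2 (by positivity))
  refine ((tendsto_inv_nhdsGT_zero.comp h2π).atTop_mul_const (norm_pos_iff.2 hL)).congr' ?_
  filter_upwards [self_mem_nhdsWithin] with t (ht : 0 < t)
  simp [norm_smul, abs_of_pos ht, abs_of_pos pi_pos]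

variable [MeasurableSpace V] [BorelSpace V] {μ : Measure V} [μ.IsAddHaarMeasure]

/-- Riemann–Lebesgue: the integral is the real part of the Fourier transform of `g` at
`(2πt)⁻¹ • L`. -/
theorem tendsto_integral_mul_cos_div {g : V → ℝ} (hg : Integrable g μ) {L : StrongDual ℝ V}
    (hL : L ≠ 0) :
    Tendsto (fun t => ∫ x, g x * cos (L x / t) ∂μ) (𝓝[>] 0) (𝓝 0) := by
  have hRL := (tendsto_integral_exp_smul_cocompact (fun x => (g x : ℂ)) μ).comp
    (tendsto_inv_smul_cocompact hL)
  have hre := (Complex.continuous_re.tendsto 0).comp hRL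
  rw [Complex.zero_re] at hre
  refine hre.congr' ?_
  filter_upwards [self_mem_nhdsWithin] with t (ht : 0 < t)
  have hint := (fourierIntegral_convergent_iff' (E := ℂ) (μ := μ) (ContinuousLinearMap.apply ℝ ℝ)
    ((2 * π * t)⁻¹ • L) (f := fun x => (g x : ℂ))).2 hg.ofReal
  simp only [ContinuousLinearMap.apply_apply] at hint
  refine (Complex.reCLM.integral_comp_comm hint).symm.trans (congrArg _ (funext fun x => ?_))
  have hphase : 2 * π * -((2 * π * t)⁻¹ • L) x = -(L x / t) := by
    simp only [smul_apply, smul_eq_mul]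
    field_simp
  rw [Complex.reCLM_apply, Circle.smul_def, Real.fourierChar_apply, hphase, smul_eq_mul,
    Complex.mul_re, Complex.exp_ofReal_mul_I_re, Complex.ofReal_re, Complex.ofReal_im, cos_neg]
  ring

theorem integral_mul_sin_div_div_eq {f : V → ℝ} (hf : ContDiff ℝ 1 f)
    (hfs : HasCompactSupport f) (L : StrongDual ℝ V) {v : V} (hv : L v = 1) (t : ℝ) :
    ∫ x, f x * (sin (L x / t) / t) ∂μ = ∫ x, fderiv ℝ f x v * cos (L x / t) ∂μ := by
  have hf' : Continuous (fderiv ℝ f · v) :=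
    (hf.continuous_fderiv one_ne_zero).clm_apply continuous_const
  have hibp := integral_bilinear_hasFDerivAt_right_eq_neg_left_of_integrable (μ := μ)
    (B := ContinuousLinearMap.mul ℝ ℝ) (v := v) (f := f) (g := fun y => cos ((t⁻¹ • L) y))
    ((hf'.mul (by fun_prop)).integrable_of_hasCompactSupport (hfs.fderiv_apply ℝ v).mul_right)
    ((hf.continuous.mul (by fun_prop)).integrable_of_hasCompactSupport hfs.mul_right)
    ((hf.continuous.mul (by fun_prop)).integrable_of_hasCompactSupport hfs.mul_right)
    (fun x _ => (hf.differentiable one_ne_zero x).hasFDerivAt)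
    (fun x _ => (t⁻¹ • L).hasFDerivAt.cos)
  simpa only [ContinuousLinearMap.mul_apply', smul_apply, hv, smul_eq_mul, mul_one, neg_mul,
    neg_div, mul_neg, integral_neg, neg_inj, inv_mul_eq_div, ← div_eq_mul_inv] using hibp

theorem tendsto_integral_mul_sin_div_div {f : V → ℝ} (hf : ContDiff ℝ 1 f)
    (hfs : HasCompactSupport f) (L : StrongDual ℝ V) :
    Tendsto (fun t => ∫ x, f x * (sin (L x / t) / t) ∂μ) (𝓝[>] 0) (𝓝 0) := by
  rcases eq_or_ne L 0 with rfl | hL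
  · simp
  obtain ⟨v, hv⟩ : ∃ v, L v = 1 := by
    obtain ⟨w, hw⟩ := DFunLike.ne_iff.1 hL
    exact ⟨(L w)⁻¹ • w, by simp_all⟩
  simp only [integral_mul_sin_div_div_eq hf hfs L hv]
  exact tendsto_integral_mul_cos_div
    (((hf.continuous_fderiv one_ne_zero).clm_apply continuous_const).integrable_of_hasCompactSupport
      (hfs.fderiv_apply ℝ v)) hL

theorem weakTendsto_cos_div {L : StrongDual ℝ V} (hL : L ≠ 0) :
    WeakTendsto μ (fun t x => cos (L x / t)) (𝓝[>] 0) (fun _ => 0) :=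
  ⟨.of_forall fun _ => by fun_prop, continuous_const, fun f hf hfs => by
    simpa using tendsto_integral_mul_cos_div
      (hf.continuous.integrable_of_hasCompactSupport hfs) hL⟩

theorem weakTendsto_sin_div_div (L : StrongDual ℝ V) :
    WeakTendsto μ (fun t x => sin (L x / t) / t) (𝓝[>] 0) (fun _ => 0) :=
  ⟨.of_forall fun _ => by fun_prop, continuous_const, fun f hf hfs => by
    simpa using tendsto_integral_mul_sin_div_div hf hfs L⟩

theorem weakTendsto_cos_div_sq {L : StrongDual ℝ V} (hL : L ≠ 0) :
    WeakTendsto μ (fun t x => cos (L x / t) ^ 2) (𝓝[>] 0) (fun _ => 1 / 2) := by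
  have h2L : (2 : ℝ) • L ≠ 0 := smul_ne_zero two_ne_zero hL
  have h := (WeakTendsto.const (μ := μ) (l := 𝓝[>] 0) (continuous_const (y := (1 / 2 : ℝ)))).add
    ((weakTendsto_cos_div h2L).const_mul (1 / 2))
  simp only [mul_zero, add_zero] at h
  refine h.congr' (.of_forall fun t => funext fun x => ?_)
  rw [cos_sq, smul_apply, smul_eq_mul, mul_div_assoc]
  ring

theorem weakTendsto_cos_div_mul_cos_div {L M : StrongDual ℝ V} (hsub : L - M ≠ 0)
    (hadd : L + M ≠ 0) :
    WeakTendsto μ (fun t x => cos (L x / t) * cos (M x / t)) (𝓝[>] 0) (fun _ => 0) := by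
  have h := ((weakTendsto_cos_div (μ := μ) hsub).add (weakTendsto_cos_div hadd)).const_mul (1 / 2)
  simp only [add_zero, mul_zero] at h
  refine h.congr' (.of_forall fun t => funext fun x => ?_)
  rw [sub_apply, add_apply, sub_div, add_div, cos_sub, cos_add]
  ring

end Oscillation

theorem hasDerivAt_update_apply {ι : Type*} [DecidableEq ι] {g : ℝ → ℝ} {d : ℝ} (x : ι → ℝ)
    (i j : ι) (hg : HasDerivAt g d (x j)) :
    HasDerivAt (fun t => g (Function.update x i t j)) (if j = i then d else 0) (x i) := by
  by_cases hji : j = i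
  · subst hji
    simpa using hg
  · simpa [Function.update_of_ne hji, hji] using hasDerivAt_const (x i) (g (x j))

section Conformal

variable (A : ℝ) {lam : ℝ}

theorem phiConf_eq_sum (lam : ℝ) (x : Fin 3 → ℝ) :
    phiConf A lam x = ∑ k, lam * A * sin (x k / lam) := by
  simp only [phiConf, Fin.sum_univ_three, mul_add]

theorem dphiConf_eq (hlam : lam ≠ 0) (i : Fin 3) (x : Fin 3 → ℝ) :
    dphiConf A lam i x = A * cos (x i / lam) := by
  have hsin (s : ℝ) : HasDerivAt (fun s => lam * A * sin (s / lam)) (A * cos (s / lam)) s :=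
    (((hasDerivAt_id' s).div_const lam).sin.const_mul (lam * A)).congr_deriv (by field_simp)
  have h := HasDerivAt.fun_sum (u := Finset.univ) fun k _ => hasDerivAt_update_apply x i k (hsin _)
  simp only [Finset.sum_ite_eq', Finset.mem_univ, if_true] at h
  simp only [dphiConf, phiConf_eq_sum]
  exact h.deriv

theorem d2phiConf_eq (hlam : lam ≠ 0) (i j : Fin 3) (x : Fin 3 → ℝ) :
    d2phiConf A lam i j x = if j = i then -A * (sin (x i / lam) / lam) else 0 := by
  have hcos : HasDerivAt (fun s => A * cos (s / lam)) (-A * (sin (x j / lam) / lam)) (x j) :=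
    (((hasDerivAt_id' (x j)).div_const lam).cos.const_mul A).congr_deriv (by ring)
  have h := hasDerivAt_update_apply x i j hcos
  simp only [d2phiConf, dphiConf_eq A hlam]
  rw [h.deriv]
  split_ifs with hji <;> simp [hji]

theorem weakTendsto_d2phiConf (i j : Fin 3) :
    WeakTendsto volume (fun t => d2phiConf A t i j) (𝓝[>] 0) (fun _ => 0) := by
  by_cases hji : j = i
  · have h := (weakTendsto_sin_div_div (μ := volume)
      (ContinuousLinearMap.proj i : StrongDual ℝ (Fin 3 → ℝ))).const_mul (-A)
    simp only [mul_zero] at h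
    refine h.congr' ?_
    filter_upwards [self_mem_nhdsWithin] with t (ht : 0 < t)
    ext x
    rw [d2phiConf_eq A ht.ne', if_pos hji]
    rfl
  · refine (WeakTendsto.const continuous_const).congr' ?_
    filter_upwards [self_mem_nhdsWithin] with t (ht : 0 < t)
    ext x
    rw [d2phiConf_eq A ht.ne', if_neg hji]

theorem weakTendsto_cos_div_mul_cos_div_apply (i j : Fin 3) :
    WeakTendsto volume (fun t (x : Fin 3 → ℝ) => cos (x i / t) * cos (x j / t)) (𝓝[>] 0)
      (fun _ => if i = j then 1 / 2 else 0) := by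
  set L : Fin 3 → StrongDual ℝ (Fin 3 → ℝ) := fun k => ContinuousLinearMap.proj k
  by_cases hij : i = j
  · subst hij
    have hL : L i ≠ 0 := fun h => by simpa [L] using DFunLike.congr_fun h (Pi.single i 1)
    have h := weakTendsto_cos_div_sq (μ := volume) hL
    simp only [if_true, ← sq]
    exact h
  · have hsub : L i - L j ≠ 0 := fun h => by
      simpa [L, Ne.symm hij] using DFunLike.congr_fun h (Pi.single i 1)
    have hadd : L i + L j ≠ 0 := fun h => by
      simpa [L, Ne.symm hij] using DFunLike.congr_fun h (Pi.single i 1)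
    have h := weakTendsto_cos_div_mul_cos_div (μ := volume) hsub hadd
    simp only [hij, if_false]
    exact h

theorem weakTendsto_dphiConf_mul_dphiConf (i j : Fin 3) :
    WeakTendsto volume (fun t x => dphiConf A t i x * dphiConf A t j x) (𝓝[>] 0)
      (fun _ => if i = j then A ^ 2 / 2 else 0) := by
  convert ((weakTendsto_cos_div_mul_cos_div_apply i j).const_mul (A ^ 2)).congr' ?_ using 2
  · split_ifs <;> ring
  · filter_upwards [self_mem_nhdsWithin] with t (ht : 0 < t)
    ext x
    simp only [dphiConf_eq A ht.ne']
    ring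

theorem weakTendsto_lapPhiConf :
    WeakTendsto volume (fun t => lapPhiConf A t) (𝓝[>] 0) (fun _ => 0) := by
  have h := WeakTendsto.finset_sum Finset.univ fun i _ => weakTendsto_d2phiConf A i i
  simp only [Finset.sum_const_zero] at h
  exact h

theorem weakTendsto_gradSqPhiConf :
    WeakTendsto volume (fun t => gradSqPhiConf A t) (𝓝[>] 0) (fun _ => 3 * A ^ 2 / 2) := by
  have h := WeakTendsto.finset_sum Finset.univ fun i _ => weakTendsto_dphiConf_mul_dphiConf A i i
  convert h using 3 with t x
  · simp only [gradSqPhiConf, sq]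
  · simp only [if_true, Finset.sum_const, Finset.card_univ, Fintype.card_fin, nsmul_eq_mul]
    ring

end Conformal

theorem effective_stress_energy_synge_general (A : ℝ) (i j : Fin 3)
    (f : (Fin 3 → ℝ) → ℝ) (hf : ContDiff ℝ 1 f) (hsupp : HasCompactSupport f) :
    Tendsto (fun lam : ℝ =>
        ∫ x : Fin 3 → ℝ, f x * (2 * lapPhiConf A lam x + gradSqPhiConf A lam x))
      (nhdsWithin 0 (Set.Ioi 0))
      (nhds ((3 * A ^ 2 / 2) * ∫ x : Fin 3 → ℝ, f x)) ∧
    Tendsto (fun lam : ℝ =>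
        ∫ x : Fin 3 → ℝ, f x *
          (2 * d2phiConf A lam i j x
            - 2 * (if i = j then (1:ℝ) else 0) * lapPhiConf A lam x
            - 2 * dphiConf A lam i x * dphiConf A lam j x
            - (if i = j then (1:ℝ) else 0) * gradSqPhiConf A lam x))
      (nhdsWithin 0 (Set.Ioi 0))
      (nhds (-(5 * A ^ 2 / 2) * (if i = j then (1:ℝ) else 0) * ∫ x : Fin 3 → ℝ, f x)) := by
  have hlap := weakTendsto_lapPhiConf A
  have hgrad := weakTendsto_gradSqPhiConf A
  refine ⟨?_, ?_⟩
  · have h := (hlap.const_mul 2).add hgrad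
    simp only [mul_zero, zero_add] at h
    exact h.tendsto_integral_mul_const hf hsupp
  · set δ : ℝ := if i = j then 1 else 0 with hδ
    have h := (((weakTendsto_d2phiConf A i j).const_mul 2).sub (hlap.const_mul (2 * δ))).sub
      ((weakTendsto_dphiConf_mul_dphiConf A i j).const_mul 2) |>.sub (hgrad.const_mul δ)
    have h' : WeakTendsto volume (fun t x => 2 * d2phiConf A t i j x - 2 * δ * lapPhiConf A t x
        - 2 * dphiConf A t i x * dphiConf A t j x - δ * gradSqPhiConf A t x) (𝓝[>] 0)
        (fun _ => -(5 * A ^ 2 / 2) * δ) := by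
      convert h using 3 with t x
      · ring
      · rw [hδ]; split_ifs <;> ring
    exact h'.tendsto_integral_mul_const hf hsupp

/-- For `φ_λ(x) = λ·A·(sin(x₁/λ)+sin(x₂/λ)+sin(x₃/λ))`, every
continuously differentiable compactly supported `f : ℝ³ → ℝ` and all `i, j`:
(a) `∫ f·(2Δφ_λ + |∇φ_λ|²) → (3A²/2)·∫ f` and
(b) `∫ f·(2∂_i∂_jφ_λ − 2δ_{ij}Δφ_λ − 2(∂_iφ_λ)(∂_jφ_λ) − δ_{ij}|∇φ_λ|²) → −(5A²/2)·δ_{ij}·∫ f`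
as `λ → 0⁺`; hence the effective stress-energy tensor has `t⁽⁰⁾₀₀ = 3A²/(16π)` and
`t⁽⁰⁾_{ij} = −(5A²/(16π))·δ_{ij}`, a `P = −(5/3)·ρ` fluid, neither traceless nor
satisfying the weak energy condition. -/
theorem effective_stress_energy_synge (A : ℝ) (hA : 0 < A) (i j : Fin 3)
    (f : (Fin 3 → ℝ) → ℝ) (hf : ContDiff ℝ 1 f) (hsupp : HasCompactSupport f) :
    Tendsto (fun lam : ℝ =>
        ∫ x : Fin 3 → ℝ, f x * (2 * lapPhiConf A lam x + gradSqPhiConf A lam x))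
      (nhdsWithin 0 (Set.Ioi 0))
      (nhds ((3 * A ^ 2 / 2) * ∫ x : Fin 3 → ℝ, f x)) ∧
    Tendsto (fun lam : ℝ =>
        ∫ x : Fin 3 → ℝ, f x *
          (2 * d2phiConf A lam i j x
            - 2 * (if i = j then (1:ℝ) else 0) * lapPhiConf A lam x
            - 2 * dphiConf A lam i x * dphiConf A lam j x
            - (if i = j then (1:ℝ) else 0) * gradSqPhiConf A lam x))
      (nhdsWithin 0 (Set.Ioi 0))
      (nhds (-(5 * A ^ 2 / 2) * (if i = j then (1:ℝ) else 0) * ∫ x : Fin 3 → ℝ, f x)) :=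
  effective_stress_energy_synge_general A i j f hf hsupp
end

section
/- Let f : ℝ² → ℝ be continuous with compact support, let a ≠ 0, b ≠ 0, and φ₁, φ₂ ∈ ℝ. Then lim_{N→∞} ∬_{ℝ²} f(τ,θ)·cos(a·N·e^{−τ} + φ₁)·cos(b·N·θ + φ₂) dτ dθ = 0. -/
/-!
By Fubini the θ-integral can be taken inside. For almost every τ the slice `f(τ, ·)` is
integrable, so by the Riemann–Lebesgue lemma `∫ f(τ,θ) cos(bNθ + φ₂) dθ → 0`; the factor
`cos(aNe^{-τ} + φ₁)` is bounded by `1`, and dominated convergence with the majorant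
`τ ↦ ∫ |f(τ,θ)| dθ` concludes.
-/

open Filter MeasureTheory

open Real Complex FourierTransform in
theorem tendsto_integral_mul_cos_cocompact {h : ℝ → ℝ} (hh : Integrable h) (φ : ℝ) :
    Tendsto (fun t : ℝ => ∫ θ, h θ * Real.cos (t * θ + φ)) (cocompact ℝ) (nhds 0) := by
  -- `cos (t * θ + φ) = re (e^{iφ} e^{itθ})`, and `e^{itθ}` is the Fourier kernel at `-t / 2π`.
  have hscale : Tendsto (fun t : ℝ => -(2 * π)⁻¹ * t) (cocompact ℝ) (cocompact ℝ) :=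
    tendsto_cocompact_mul_left₀ (by simp [Real.pi_ne_zero])
  have hfourier := (continuous_re.tendsto' _ 0 (by simp)).comp <|
    ((Real.zero_at_infty_fourier fun θ => (h θ : ℂ)).comp hscale).const_mul (exp (φ * I))
  refine hfourier.congr fun t => ?_
  have hint : Integrable fun θ : ℝ => exp (φ * I) * (exp (↑(t * θ) * I) * h θ) := by
    refine (hh.ofReal.bdd_mul (c := 1) (by fun_prop) (.of_forall fun θ => ?_)).const_mul _
    rw [norm_exp_ofReal_mul_I]
  have hphase : ∀ θ : ℝ, -2 * π * θ * (-(2 * π)⁻¹ * t) = t * θ := fun θ => by field_simp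
  have hre := integral_re hint
  simp only [RCLike.re_to_complex] at hre
  simp only [Function.comp_apply, Real.fourier_real_eq_integral_exp_smul, hphase, smul_eq_mul,
    ← integral_const_mul, ← hre]
  congr 1 with θ
  rw [← mul_assoc, ← Complex.exp_add, ← add_mul, ← ofReal_add, re_mul_ofReal,
    exp_ofReal_mul_I_re, add_comm, mul_comm]

theorem tendsto_integral_mul_mul_cos_snd {ι : Type*} {l : Filter ι} [l.IsCountablyGenerated]
    {f : ℝ × ℝ → ℝ} (hf : Integrable f) {u : ι → ℝ → ℝ} (hu : ∀ i, Measurable (u i))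
    (hu_le : ∀ i τ, |u i τ| ≤ 1) {c : ι → ℝ} (hc : Tendsto c l (cocompact ℝ)) (φ : ℝ) :
    Tendsto (fun i => ∫ p, f p * u i p.1 * Real.cos (c i * p.2 + φ)) l (nhds 0) := by
  rw [Measure.volume_eq_prod] at hf ⊢
  have hcos_le : ∀ x, ‖Real.cos x‖ ≤ 1 := Real.abs_cos_le_one
  have hmul_le : ∀ i τ (x : ℝ), ‖u i τ * x‖ ≤ ‖x‖ := fun i τ x => by
    rw [norm_mul]; exact mul_le_of_le_one_left (norm_nonneg x) (hu_le i τ)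
  have hosc : ∀ i, Integrable (fun p : ℝ × ℝ => f p * Real.cos (c i * p.2 + φ))
      (volume.prod volume) := fun i =>
    hf.mul_bdd (c := 1) (by fun_prop) (.of_forall fun p => hcos_le _)
  have hfubini : ∀ i, ∫ p, f p * u i p.1 * Real.cos (c i * p.2 + φ) ∂(volume.prod volume) =
      ∫ τ, u i τ * ∫ θ, f (τ, θ) * Real.cos (c i * θ + φ) := fun i => by
    have hint : Integrable (fun p : ℝ × ℝ => f p * u i p.1 * Real.cos (c i * p.2 + φ))
        (volume.prod volume) :=
      (hf.mul_bdd (c := 1) ((hu i).comp measurable_fst).aestronglyMeasurable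
        (.of_forall fun p => hu_le i p.1)).mul_bdd (c := 1) (by fun_prop)
        (.of_forall fun p => hcos_le _)
    rw [integral_prod _ hint]
    congr 1 with τ
    rw [← integral_const_mul]
    congr 1 with θ
    ring
  simp_rw [hfubini]
  rw [← integral_zero ℝ ℝ]
  refine tendsto_integral_filter_of_dominated_convergence (l := l) (fun τ => ∫ θ, ‖f (τ, θ)‖)
    (.of_forall fun i => (hu i).aestronglyMeasurable.mul (hosc i).1.integral_prod_right')
    (.of_forall fun i => ?_) hf.integral_norm_prod_left ?_
  · filter_upwards [hf.prod_right_ae] with τ hτ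
    refine (hmul_le i τ _).trans (norm_integral_le_of_norm_le hτ.norm (.of_forall fun θ => ?_))
    rw [norm_mul]
    exact mul_le_of_le_one_right (norm_nonneg _) (hcos_le _)
  · filter_upwards [hf.prod_right_ae] with τ hτ
    exact squeeze_zero_norm (fun i => hmul_le i τ _)
      (tendsto_norm_zero.comp ((tendsto_integral_mul_cos_cocompact hτ φ).comp hc))

theorem wlim_cross_phase_general (f : ℝ × ℝ → ℝ) (hf : Continuous f)
    (hsupp : HasCompactSupport f) (a b : ℝ) (hb : b ≠ 0) (φ₁ φ₂ : ℝ) :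
    Tendsto (fun N : ℕ =>
        ∫ p : ℝ × ℝ, f p * Real.cos (a * (N : ℝ) * Real.exp (-p.1) + φ₁)
          * Real.cos (b * (N : ℝ) * p.2 + φ₂))
      atTop (nhds 0) := by
  have hfreq : Tendsto (fun N : ℕ => b * N) atTop (cocompact ℝ) :=
    (tendsto_cocompact_mul_left₀ hb).comp
      (tendsto_natCast_atTop_atTop.mono_right atTop_le_cocompact)
  exact tendsto_integral_mul_mul_cos_snd (hf.integrable_of_hasCompactSupport hsupp)
    (u := fun (N : ℕ) τ => Real.cos (a * N * Real.exp (-τ) + φ₁)) (fun _ => by fun_prop)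
    (fun _ _ => Real.abs_cos_le_one _) hfreq φ₂

/-- For continuous compactly supported `f : ℝ² → ℝ`, `a ≠ 0`,
`b ≠ 0`, and phases `φ₁, φ₂`, the two-frequency oscillatory integrals vanish in the
limit: `∬ f(τ,θ)·cos(a·N·e^{−τ} + φ₁)·cos(b·N·θ + φ₂) dτ dθ → 0` as `N → ∞`. -/
theorem wlim_cross_phase (f : ℝ × ℝ → ℝ) (hf : Continuous f)
    (hsupp : HasCompactSupport f) (a b : ℝ) (ha : a ≠ 0) (hb : b ≠ 0) (φ₁ φ₂ : ℝ) :
    Tendsto (fun N : ℕ =>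
        ∫ p : ℝ × ℝ, f p * Real.cos (a * (N : ℝ) * Real.exp (-p.1) + φ₁)
          * Real.cos (b * (N : ℝ) * p.2 + φ₂))
      atTop (nhds 0) :=
  wlim_cross_phase_general f hf hsupp a b hb φ₁ φ₂
end
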